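/- arXiv:1906.05159 — 4 statements merged into one kernel-verified Lean document; each statement's English description precedes it below -/
import Mathlib

section
/- For a positive definite matrix Θ that is an M-matrix (i.e., Θ_{ij} ≤ 0 for all i ≠ j), every off-diagonal entry of any principal-submatrix inverse of Σ = Θ^{-1} satisfies: for any subset M ⊆ [p] containing i and j, ((Σ_{M,M})^{-1})_{i,j} ≤ Θ_{ij} ≤ 0. -/
/-!
By the Schur complement formula,
`(Σ_{M,M})⁻¹ = Θ_{M,M} - Θ_{M,Mᶜ} (Θ_{Mᶜ,Mᶜ})⁻¹ Θ_{Mᶜ,M}`.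
The off-diagonal blocks of `Θ` are entrywise nonpositive, and `Θ_{Mᶜ,Mᶜ}` is again a positive
definite Z-matrix, so its inverse is entrywise nonnegative: if `A x ≥ 0`, pairing with the
negative part `x⁻` gives `0 < x⁻ ⬝ A x⁻ ≤ x⁻ ⬝ A x⁺ ≤ 0` unless `x⁻ = 0`. Hence the correction
term is entrywise nonnegative.
-/

open Matrix

namespace Matrix

variable {m n : Type*} [Fintype m] [Fintype n]

theorem inv_toBlocks₁₁_inv_eq_schur [DecidableEq m] [DecidableEq n] {α : Type*} [CommRing α]
    (A : Matrix (m ⊕ n) (m ⊕ n) α) (hA : IsUnit A.det) (hD : IsUnit A.toBlocks₂₂.det) :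
    (A⁻¹.toBlocks₁₁)⁻¹ = A.toBlocks₁₁ - A.toBlocks₁₂ * A.toBlocks₂₂⁻¹ * A.toBlocks₂₁ := by
  have hblocks := A.mul_nonsing_inv hA
  generalize A⁻¹ = B at hblocks ⊢
  rw [← fromBlocks_toBlocks A, ← fromBlocks_toBlocks B, fromBlocks_multiply,
    ← fromBlocks_one, fromBlocks_inj] at hblocks
  obtain ⟨h₁₁, -, h₂₁, -⟩ := hblocks
  have hB₂₁ : B.toBlocks₂₁ = -(A.toBlocks₂₂⁻¹ * A.toBlocks₂₁ * B.toBlocks₁₁) := by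
    rw [Matrix.mul_assoc, ← Matrix.mul_neg, ← eq_neg_of_add_eq_zero_right h₂₁,
      ← Matrix.mul_assoc, nonsing_inv_mul _ hD, Matrix.one_mul]
  refine inv_eq_left_inv ?_
  rw [hB₂₁, Matrix.mul_neg, ← sub_eq_add_neg] at h₁₁
  rw [Matrix.sub_mul, ← h₁₁]
  simp only [Matrix.mul_assoc]

theorem PosDef.nonneg_of_mulVec_nonneg {A : Matrix n n ℝ} (hA : A.PosDef)
    (hZ : ∀ i j, i ≠ j → A i j ≤ 0) {x : n → ℝ} (hx : 0 ≤ A *ᵥ x) : 0 ≤ x := by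
  by_contra hneg
  have hx_neg : x⁻ ≠ 0 := by rwa [Ne, negPart_eq_zero]
  have hcross : x⁻ ⬝ᵥ A *ᵥ x⁺ ≤ 0 := by
    simp only [dotProduct, mulVec, Finset.mul_sum]
    refine Finset.sum_nonpos fun k _ => Finset.sum_nonpos fun l _ => ?_
    rcases eq_or_ne k l with rfl | hkl
    · rcases le_total 0 (x k) with h | h
      · simp [negPart_eq_zero.2 h]
      · simp [posPart_eq_zero.2 h]
    · exact mul_nonpos_of_nonneg_of_nonpos (negPart_nonneg _)
        (mul_nonpos_of_nonpos_of_nonneg (hZ k l hkl) (posPart_nonneg _))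
  have hsplit : A *ᵥ x = A *ᵥ x⁺ - A *ᵥ x⁻ := by rw [← mulVec_sub, posPart_sub_negPart]
  have hpair : 0 ≤ x⁻ ⬝ᵥ A *ᵥ x := dotProduct_nonneg_of_nonneg (negPart_nonneg x) hx
  have hpos := hA.dotProduct_mulVec_pos hx_neg
  rw [star_trivial] at hpos
  rw [hsplit, dotProduct_sub] at hpair
  linarith

theorem PosDef.inv_apply_nonneg [DecidableEq n] {A : Matrix n n ℝ} (hA : A.PosDef)
    (hZ : ∀ i j, i ≠ j → A i j ≤ 0) (i j : n) : 0 ≤ A⁻¹ i j := by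
  have hcol : A *ᵥ (A⁻¹ *ᵥ Pi.single j 1) = Pi.single j 1 := by
    rw [mulVec_mulVec, mul_nonsing_inv _ ((isUnit_iff_isUnit_det A).1 hA.isUnit), one_mulVec]
  have := hA.nonneg_of_mulVec_nonneg hZ (hcol ▸ Pi.single_nonneg.2 zero_le_one) i
  simpa [mulVec_single_one] using this

theorem mul_mul_apply_nonneg {l o α : Type*} [Ring α] [PartialOrder α] [IsOrderedRing α]
    {B : Matrix l m α} {E : Matrix m n α} {C : Matrix n o α} {a : l} {b : o}
    (hB : ∀ k, B a k ≤ 0) (hE : ∀ k k', 0 ≤ E k k') (hC : ∀ k, C k b ≤ 0) :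
    0 ≤ (B * E * C) a b := by
  simp only [mul_apply, Finset.sum_mul]
  exact Finset.sum_nonneg fun k' _ => Finset.sum_nonneg fun k _ =>
    mul_nonneg_of_nonpos_of_nonpos (mul_nonpos_of_nonpos_of_nonneg (hB k) (hE k k')) (hC k')

theorem PosDef.inv_toBlocks₁₁_inv_apply_le [DecidableEq m] [DecidableEq n]
    {A : Matrix (m ⊕ n) (m ⊕ n) ℝ} (hA : A.PosDef) (hZ : ∀ i j, i ≠ j → A i j ≤ 0) (a b : m) :
    (A⁻¹.toBlocks₁₁)⁻¹ a b ≤ A.toBlocks₁₁ a b := by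
  have hD : A.toBlocks₂₂.PosDef := hA.submatrix Sum.inr_injective
  rw [inv_toBlocks₁₁_inv_eq_schur A ((isUnit_iff_isUnit_det A).1 hA.isUnit)
    ((isUnit_iff_isUnit_det _).1 hD.isUnit), sub_apply, sub_le_self_iff]
  exact mul_mul_apply_nonneg (fun _ => hZ _ _ Sum.inl_ne_inr)
    (hD.inv_apply_nonneg fun _ _ hkk' => hZ _ _ (Sum.inr_injective.ne hkk'))
    (fun _ => hZ _ _ Sum.inr_ne_inl)

end Matrix

theorem stmt0_general {p : ℕ} (Θ : Matrix (Fin p) (Fin p) ℝ)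
    (hpd : Θ.PosDef)
    (hM : ∀ i j : Fin p, i ≠ j → Θ i j ≤ 0)
    (Sg : Matrix (Fin p) (Fin p) ℝ) (hSg : Sg = Θ⁻¹)
    (M : Finset (Fin p)) (i j : Fin p) (hij : i ≠ j)
    (hi : i ∈ M) (hj : j ∈ M) :
    ((Matrix.of fun a b : ↥M => Sg a.1 b.1)⁻¹) ⟨i, hi⟩ ⟨j, hj⟩ ≤ Θ i j ∧ Θ i j ≤ 0 := by
  classical
  let e := Equiv.sumCompl (· ∈ M)
  have hSg_block : (Matrix.of fun a b : ↥M => Sg a.1 b.1) = (Θ.submatrix e e)⁻¹.toBlocks₁₁ := by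
    rw [hSg, inv_submatrix_equiv]
    rfl
  rw [hSg_block]
  exact ⟨(hpd.submatrix e.injective).inv_toBlocks₁₁_inv_apply_le
    (fun a b hab => hM _ _ (e.injective.ne hab)) _ _, hM i j hij⟩

/-- For a symmetric positive definite M-matrix `Θ` (`Θ i j ≤ 0` for `i ≠ j`) with
`Σ = Θ⁻¹`, and any index subset `M` containing `i ≠ j`, the off-diagonal entry of the
inverse of the principal submatrix `Σ_{M,M}` satisfies
`((Σ_{M,M})⁻¹)_{i,j} ≤ Θ_{i,j} ≤ 0`. -/
theorem stmt0 {p : ℕ} (Θ : Matrix (Fin p) (Fin p) ℝ)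
    (hpd : Θ.PosDef) (hsym : Θ.IsSymm)
    (hM : ∀ i j : Fin p, i ≠ j → Θ i j ≤ 0)
    (Sg : Matrix (Fin p) (Fin p) ℝ) (hSg : Sg = Θ⁻¹)
    (M : Finset (Fin p)) (i j : Fin p) (hij : i ≠ j)
    (hi : i ∈ M) (hj : j ∈ M) :
    ((Matrix.of fun a b : ↥M => Sg a.1 b.1)⁻¹) ⟨i, hi⟩ ⟨j, hj⟩ ≤ Θ i j ∧ Θ i j ≤ 0 :=
  stmt0_general Θ hpd hM Sg hSg M i j hij hi hj
end

section
/- Let X be a Gaussian random vector with positive definite precision matrix Θ that is an M-matrix. Then for any distinct i, j ∈ [p] and any S ⊆ [p] \ {i,j}, the partial correlation coefficient satisfies ρ_{ij|S} ≥ ρ_{ij|[p]\{i,j}}. -/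
/-!
Write `Σ = Θ⁻¹` and `N = Mᶜ`. By the Schur complement formula
`(Σ_{MM})⁻¹ = Θ_{MM} - Θ_{MN} Θ_{NN}⁻¹ Θ_{NM}`. The block `Θ_{NN}` is again a positive definite
M-matrix, so its inverse is entrywise nonnegative, while `Θ_{MN}` and `Θ_{NM}` are entrywise
nonpositive; hence `(Σ_{MM})⁻¹ ≤ Θ_{MM}` entrywise, with equality when `M = [p]`. Passing from
`K = Θ` to `K = (Σ_{MM})⁻¹` thus shrinks `K_{ii}`, `K_{jj}` and the nonpositive `K_{ij}`, which can
only increase `-K_{ij} / √(K_{ii} K_{jj})`.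
-/

/-- The partial correlation coefficient `ρ_{ij|S}` of a Gaussian vector with covariance
matrix `Sg`, computed from the inverse of the principal submatrix on `M = S ∪ {i,j}`:
`ρ_{ij|S} = −((Σ_{M,M})⁻¹)_{ij} / sqrt(((Σ_{M,M})⁻¹)_{ii} ((Σ_{M,M})⁻¹)_{jj})`. -/
noncomputable def partialCorr {p : ℕ} (Sg : Matrix (Fin p) (Fin p) ℝ)
    (i j : Fin p) (S : Finset (Fin p)) : ℝ :=
  let A := (Matrix.of fun a b : ↥(insert i (insert j S)) => Sg a.1 b.1)⁻¹;
  -(A ⟨i, Finset.mem_insert_self i _⟩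
      ⟨j, Finset.mem_insert_of_mem (Finset.mem_insert_self j S)⟩) /
    Real.sqrt (A ⟨i, Finset.mem_insert_self i _⟩ ⟨i, Finset.mem_insert_self i _⟩ *
      A ⟨j, Finset.mem_insert_of_mem (Finset.mem_insert_self j S)⟩
        ⟨j, Finset.mem_insert_of_mem (Finset.mem_insert_self j S)⟩)

namespace Matrix

variable {n : Type*} [Fintype n]

theorem PosDef.nonneg_of_mulVec_nonneg_s2 {Θ : Matrix n n ℝ} (hpd : Θ.PosDef)
    (hoff : ∀ a b, a ≠ b → Θ a b ≤ 0) {x : n → ℝ} (hx : ∀ k, 0 ≤ (Θ *ᵥ x) k) (k : n) :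
    0 ≤ x k := by
  -- With `y = min x 0`, `y` and `x - y` have disjoint supports, so `0 ≤ y ⬝ᵥ Θ *ᵥ (x - y)`
  -- and hence `y ⬝ᵥ Θ *ᵥ y ≤ y ⬝ᵥ Θ *ᵥ x ≤ 0`.
  set y : n → ℝ := fun k => min (x k) 0
  have hy : ∀ k, y k ≤ 0 := fun k => min_le_right _ _
  have hxy : ∀ k, 0 ≤ (x - y) k := fun k => sub_nonneg.2 (min_le_left _ _)
  have hcompl : ∀ k, y k * (x - y) k = 0 := fun k => by
    rcases le_total (x k) 0 with h | h <;> simp [y, h]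
  have hcross : 0 ≤ y ⬝ᵥ Θ *ᵥ (x - y) := by
    simp only [dotProduct, mulVec, Finset.mul_sum]
    refine Finset.sum_nonneg fun k _ => Finset.sum_nonneg fun l _ => ?_
    rcases eq_or_ne k l with rfl | hkl
    · rw [mul_left_comm, hcompl k, mul_zero]
    · exact mul_nonneg_of_nonpos_of_nonpos (hy k)
        (mul_nonpos_of_nonpos_of_nonneg (hoff k l hkl) (hxy l))
  have hfull : y ⬝ᵥ Θ *ᵥ x ≤ 0 :=
    Finset.sum_nonpos fun k _ => mul_nonpos_of_nonpos_of_nonneg (hy k) (hx k)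
  have hy0 : y = 0 := by
    by_contra hne
    have hpos := hpd.dotProduct_mulVec_pos hne
    rw [star_trivial] at hpos
    rw [mulVec_sub, dotProduct_sub] at hcross
    linarith
  simpa [y] using congrFun hy0 k

variable [DecidableEq n]

theorem PosDef.inv_apply_nonneg_s2 {Θ : Matrix n n ℝ} (hpd : Θ.PosDef)
    (hoff : ∀ a b, a ≠ b → Θ a b ≤ 0) (a b : n) : 0 ≤ Θ⁻¹ a b := by
  have hcol : Θ *ᵥ (Θ⁻¹ *ᵥ Pi.single b 1) = Pi.single b 1 := by
    rw [mulVec_mulVec, mul_nonsing_inv _ ((isUnit_iff_isUnit_det Θ).1 hpd.isUnit), one_mulVec]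
  have := hpd.nonneg_of_mulVec_nonneg_s2 hoff (x := Θ⁻¹ *ᵥ Pi.single b 1)
    (fun k => by rw [hcol]; exact (Pi.single_nonneg.2 zero_le_one : (0 : n → ℝ) ≤ _) k) a
  simpa [mulVec_single_one] using this

theorem inv_submatrix_inv_eq_schur {α : Type*} [Field α]
    (Θ : Matrix n n α) (M : Finset n) (hΘ : IsUnit Θ.det)
    (hD : IsUnit (Θ.submatrix ((↑) : {x // x ∉ M} → n) ((↑) : {x // x ∉ M} → n)).det) :
    ((Θ⁻¹).submatrix ((↑) : M → n) ((↑) : M → n))⁻¹ =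
      Θ.submatrix ((↑) : M → n) ((↑) : M → n) -
        Θ.submatrix ((↑) : M → n) ((↑) : {x // x ∉ M} → n) *
        (Θ.submatrix ((↑) : {x // x ∉ M} → n) ((↑) : {x // x ∉ M} → n))⁻¹ *
        Θ.submatrix ((↑) : {x // x ∉ M} → n) ((↑) : M → n) := by
  set e := Equiv.sumCompl (· ∈ M)
  set A := Θ.submatrix ((↑) : M → n) ((↑) : M → n)
  set B := Θ.submatrix ((↑) : M → n) ((↑) : {x // x ∉ M} → n)
  set C := Θ.submatrix ((↑) : {x // x ∉ M} → n) ((↑) : M → n)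
  set D := Θ.submatrix ((↑) : {x // x ∉ M} → n) ((↑) : {x // x ∉ M} → n)
  have hblocks : Θ.submatrix e e = fromBlocks A B C D := by
    ext (a | a) (b | b) <;> simp [e, A, B, C, D]
  let : Invertible D := D.invertibleOfIsUnitDet hD
  let : Invertible (fromBlocks A B C D) :=
    (fromBlocks A B C D).invertibleOfIsUnitDet (by rwa [← hblocks, det_submatrix_equiv_self])
  let : Invertible (A - B * ⅟D * C) := invertibleOfFromBlocks₂₂Invertible A B C D
  have hinv : (Θ⁻¹).submatrix ((↑) : M → n) ((↑) : M → n) =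
      (A - B * D⁻¹ * C)⁻¹ := by
    have := congrArg toBlocks₁₁ (invOf_fromBlocks₂₂_eq A B C D)
    simp only [toBlocks_fromBlocks₁₁, invOf_eq_nonsing_inv, ← hblocks, inv_submatrix_equiv] at this
    rw [← this]
    ext a b
    simp [e, toBlocks₁₁]
  rw [hinv, inv_inv_of_invertible]

theorem PosDef.inv_submatrix_inv_apply_le {Θ : Matrix n n ℝ} (hpd : Θ.PosDef)
    (hoff : ∀ a b, a ≠ b → Θ a b ≤ 0) (M : Finset n) (a b : M) :
    ((Θ⁻¹).submatrix ((↑) : M → n) ((↑) : M → n))⁻¹ a b ≤ Θ a b := by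
  have hD := hpd.submatrix (Subtype.val_injective (p := (· ∉ M)))
  rw [inv_submatrix_inv_eq_schur Θ M ((isUnit_iff_isUnit_det Θ).1 hpd.isUnit)
    ((isUnit_iff_isUnit_det _).1 hD.isUnit), sub_apply, submatrix_apply, sub_le_self_iff]
  have hDinv := hD.inv_apply_nonneg_s2 fun k l hkl => hoff k l (Subtype.val_injective.ne hkl)
  simp only [mul_apply, Finset.sum_mul, submatrix_apply]
  refine Finset.sum_nonneg fun l _ => Finset.sum_nonneg fun k _ => ?_
  exact mul_nonneg_of_nonpos_of_nonpos
    (mul_nonpos_of_nonpos_of_nonneg (hoff _ _ fun h => k.2 (h ▸ a.2)) (hDinv k l))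
    (hoff _ _ fun h => l.2 (h ▸ b.2))

theorem inv_submatrix_inv_of_forall_mem {α : Type*} [Field α] (Θ : Matrix n n α)
    (hΘ : IsUnit Θ.det) {M : Finset n} (hmem : ∀ x, x ∈ M) :
    ((Θ⁻¹).submatrix ((↑) : M → n) ((↑) : M → n))⁻¹ =
      Θ.submatrix ((↑) : M → n) ((↑) : M → n) := by
  change ((Θ⁻¹).submatrix (Equiv.subtypeUnivEquiv hmem) (Equiv.subtypeUnivEquiv hmem))⁻¹ = _
  rw [inv_submatrix_equiv, nonsing_inv_nonsing_inv Θ hΘ]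
  rfl

end Matrix

theorem neg_div_sqrt_mul_le_neg_div_sqrt_mul {a b c a' b' c' : ℝ} (ha : 0 < a) (hb : 0 < b)
    (haa' : a ≤ a') (hbb' : b ≤ b') (hcc' : c ≤ c') (hc' : c' ≤ 0) :
    -c' / √(a' * b') ≤ -c / √(a * b) := by
  have hs : 0 < √(a * b) := Real.sqrt_pos.2 (mul_pos ha hb)
  calc -c' / √(a' * b') ≤ -c' / √(a * b) :=
        div_le_div_of_nonneg_left (neg_nonneg.2 hc') hs
          (Real.sqrt_le_sqrt (mul_le_mul haa' hbb' hb.le (ha.le.trans haa')))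
    _ ≤ -c / √(a * b) := div_le_div_of_nonneg_right (neg_le_neg hcc') hs.le

theorem stmt2_general {p : ℕ} (Θ : Matrix (Fin p) (Fin p) ℝ)
    (hpd : Θ.PosDef)
    (hM : ∀ i j : Fin p, i ≠ j → Θ i j ≤ 0)
    (Sg : Matrix (Fin p) (Fin p) ℝ) (hSg : Sg = Θ⁻¹)
    (i j : Fin p) (hij : i ≠ j) (S : Finset (Fin p)) :
    partialCorr Sg i j S ≥ partialCorr Sg i j (Finset.univ \ {i, j}) := by
  subst hSg
  have hΘ : IsUnit Θ.det := (Matrix.isUnit_iff_isUnit_det Θ).1 hpd.isUnit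
  have hfull : ∀ x, x ∈ insert i (insert j (Finset.univ \ {i, j})) := by
    intro x
    by_cases hxi : x = i <;> by_cases hxj : x = j <;> simp [hxi, hxj]
  set T := ((Θ⁻¹).submatrix ((↑) : ↥(insert i (insert j S)) → Fin p)
      ((↑) : ↥(insert i (insert j S)) → Fin p))⁻¹
  have hT : T.PosDef := (hpd.inv.submatrix Subtype.val_injective).inv
  have hTle := hpd.inv_submatrix_inv_apply_le hM (insert i (insert j S))
  have hof : ∀ M : Finset (Fin p),
      Matrix.of (fun a b : M => Θ⁻¹ a b) = (Θ⁻¹).submatrix (↑) (↑) := fun _ => rfl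
  simp only [partialCorr, hof]
  rw [Matrix.inv_submatrix_inv_of_forall_mem Θ hΘ hfull]
  exact neg_div_sqrt_mul_le_neg_div_sqrt_mul hT.diag_pos hT.diag_pos (hTle _ _) (hTle _ _)
    (hTle _ _) (hM i j hij)

/-- For a Gaussian random vector whose precision matrix `Θ` is a symmetric positive
definite M-matrix (MTP₂), with covariance `Σ = Θ⁻¹`: for any distinct `i, j` and any
`S ⊆ [p] \ {i,j}`, the partial correlation satisfies
`ρ_{ij|S} ≥ ρ_{ij|[p]∖{i,j}}`. -/
theorem stmt2 {p : ℕ} (Θ : Matrix (Fin p) (Fin p) ℝ)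
    (hpd : Θ.PosDef) (hsym : Θ.IsSymm)
    (hM : ∀ i j : Fin p, i ≠ j → Θ i j ≤ 0)
    (Sg : Matrix (Fin p) (Fin p) ℝ) (hSg : Sg = Θ⁻¹)
    (i j : Fin p) (hij : i ≠ j) (S : Finset (Fin p)) (hiS : i ∉ S) (hjS : j ∉ S) :
    partialCorr Sg i j S ≥ partialCorr Sg i j (Finset.univ \ {i, j}) :=
  stmt2_general Θ hpd hM Sg hSg i j hij S
end

section
/- Let B be a set of N elements and B_1,...,B_K independent uniformly random size-M subsets of B. Then for all ε > 0, P(max_{i<j} |B_i ∩ B_j| < M²/N + εN) ≥ 1 − exp(−2ε²N + 2 log K). -/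
/-!
Fix two of the sets, `A` and `B`. Expanding `x ^ |A ∩ B| = ∑_{S ⊆ A ∩ B} (x - 1) ^ |S|` and using
that a fixed `S` lies in a uniformly random `M`-subset with probability
`C(N - |S|, M - |S|) / C(N, M) ≤ (M / N) ^ |S|`, the moment generating function of `|A ∩ B|` is at
most that of a binomial `Bin(M, p)` with `p = M / N`, namely `(1 - p + p e^l) ^ M`. Hoeffding's
lemma bounds this by `exp (M (p l + l² / 8))`, and the Chernoff bound with `l = 4 ε N / M` gives
`P(|A ∩ B| ≥ M² / N + ε N) ≤ exp (-2 ε² N² / M) ≤ exp (-2 ε² N)`. A union bound over the `K²`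
ordered pairs of indices finishes the proof.
-/

open Finset Real

namespace Nat

theorem descFactorial_mul_pow_le_descFactorial_mul_pow {m n : ℕ} (h : m ≤ n) (j : ℕ) :
    m.descFactorial j * n ^ j ≤ n.descFactorial j * m ^ j := by
  induction j with
  | zero => simp
  | succ j ih =>
    have hstep : (m - j) * n ≤ (n - j) * m := by
      rw [Nat.sub_mul, Nat.sub_mul, mul_comm n m]
      exact Nat.sub_le_sub_left (Nat.mul_le_mul_left j h) _
    calc m.descFactorial (j + 1) * n ^ (j + 1) = m.descFactorial j * n ^ j * ((m - j) * n) := by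
          rw [descFactorial_succ]; ring
      _ ≤ n.descFactorial j * m ^ j * ((n - j) * m) := Nat.mul_le_mul ih hstep
      _ = n.descFactorial (j + 1) * m ^ (j + 1) := by rw [descFactorial_succ]; ring

theorem choose_mul_pow_le_choose_mul_pow {m n : ℕ} (h : m ≤ n) (j : ℕ) :
    m.choose j * n ^ j ≤ n.choose j * m ^ j := by
  have hdesc := descFactorial_mul_pow_le_descFactorial_mul_pow h j
  rw [descFactorial_eq_factorial_mul_choose, descFactorial_eq_factorial_mul_choose,
    mul_assoc, mul_assoc] at hdesc
  exact Nat.le_of_mul_le_mul_left hdesc j.factorial_pos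

end Nat

open MeasureTheory ProbabilityTheory in
theorem one_sub_add_mul_exp_le {p : ℝ} (hp0 : 0 ≤ p) (hp1 : p ≤ 1) (t : ℝ) :
    1 - p + p * exp t ≤ exp (p * t + t ^ 2 / 8) := by
  set μ : Measure ℝ := bernoulliMeasure 1 0 ⟨p, hp0, hp1⟩
  have hμ : ∀ᵐ x ∂μ, x ∈ Set.Icc (0 : ℝ) 1 := by
    simp only [μ, bernoulliMeasure_def, ae_add_measure_iff]
    exact ⟨Measure.ae_smul_measure (by simp) _, Measure.ae_smul_measure (by simp) _⟩
  have hmgf : p * exp (t * (1 - p)) + (1 - p) * exp (-(t * p)) ≤ exp (t ^ 2 / 8) := by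
    have hsub := (hasSubgaussianMGF_of_mem_Icc aemeasurable_id hμ).mgf_le t
    simp only [mgf, μ, integral_bernoulliMeasure] at hsub
    convert hsub using 2 <;> norm_num; ring
  have hshift : exp (p * t) * exp (t * (1 - p)) = exp t := by rw [← exp_add]; ring_nf
  have hunit : exp (p * t) * exp (-(t * p)) = 1 := by rw [← exp_add, ← exp_zero]; ring_nf
  calc 1 - p + p * exp t = exp (p * t) * (p * exp (t * (1 - p)) + (1 - p) * exp (-(t * p))) := by
        linear_combination (-p) * hshift - (1 - p) * hunit
    _ ≤ exp (p * t) * exp (t ^ 2 / 8) := by gcongr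
    _ = exp (p * t + t ^ 2 / 8) := by rw [← exp_add]

variable {α : Type*} [Fintype α] [DecidableEq α] {m : ℕ}

theorem card_filter_powersetCard_univ_superset_mul_pow_le (hm : m ≤ Fintype.card α)
    (S : Finset α) :
    #{B ∈ powersetCard m univ | S ⊆ B} * Fintype.card α ^ #S
      ≤ (Fintype.card α).choose m * m ^ #S := by
  set n := Fintype.card α
  by_cases hSm : #S ≤ m
  · have hSn : #S ≤ n := card_le_univ S
    rw [card_filter_powersetCard_subset S univ m (subset_univ S) hSm, card_univ]
    refine Nat.le_of_mul_le_mul_left ?_ (Nat.choose_pos hSn)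
    calc n.choose #S * ((n - #S).choose (m - #S) * n ^ #S)
        = n.choose m * (m.choose #S * n ^ #S) := by rw [← mul_assoc, ← Nat.choose_mul hSm]; ring
      _ ≤ n.choose m * (n.choose #S * m ^ #S) :=
          Nat.mul_le_mul_left _ (Nat.choose_mul_pow_le_choose_mul_pow hm _)
      _ = n.choose #S * (n.choose m * m ^ #S) := by ring
  · rw [filter_false_of_mem fun B hB hSB ↦
      hSm ((card_le_card hSB).trans (mem_powersetCard.1 hB).2.le)]
    simp

theorem card_filter_powersetCard_univ_superset_le (hm : m ≤ Fintype.card α) (S : Finset α) :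
    (#{B ∈ powersetCard m univ | S ⊆ B} : ℝ)
      ≤ (Fintype.card α).choose m * ((m : ℝ) / Fintype.card α) ^ #S := by
  have hpos : (0 : ℝ) < (Fintype.card α : ℝ) ^ #S := by
    rcases eq_or_ne #S 0 with hS | hS
    · simp [hS]
    · exact pow_pos (Nat.cast_pos.2 ((Nat.pos_of_ne_zero hS).trans_le (card_le_univ S))) _
  rw [div_pow, ← mul_div_assoc, le_div_iff₀ hpos]
  exact_mod_cast card_filter_powersetCard_univ_superset_mul_pow_le hm S

theorem sum_powersetCard_univ_pow_card_inter_le (hm : m ≤ Fintype.card α) (A : Finset α)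
    {x : ℝ} (hx : 1 ≤ x) :
    ∑ B ∈ powersetCard m univ, x ^ #(A ∩ B)
      ≤ (Fintype.card α).choose m * (1 + (x - 1) * (m / Fintype.card α)) ^ #A := by
  set p : ℝ := m / Fintype.card α
  have hexpand (B : Finset α) :
      x ^ #(A ∩ B) = ∑ S ∈ A.powerset, if S ⊆ B then (x - 1) ^ #S else 0 := by
    rw [← sum_filter, ← sub_add_cancel x 1, ← sum_pow_mul_eq_add_pow, add_sub_cancel_right]
    refine sum_congr ?_ fun S _ ↦ by rw [one_pow, mul_one]
    ext S
    simp only [mem_filter, mem_powerset, subset_inter_iff]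
  calc ∑ B ∈ powersetCard m univ, x ^ #(A ∩ B)
      = ∑ S ∈ A.powerset, (x - 1) ^ #S * #{B ∈ powersetCard m univ | S ⊆ B} := by
        simp_rw [hexpand]
        rw [sum_comm]
        refine sum_congr rfl fun S _ ↦ ?_
        rw [← sum_filter, sum_const, nsmul_eq_mul, mul_comm]
    _ ≤ ∑ S ∈ A.powerset, (x - 1) ^ #S * ((Fintype.card α).choose m * p ^ #S) := by
        gcongr with S
        exact card_filter_powersetCard_univ_superset_le hm S
    _ = (Fintype.card α).choose m * (1 + (x - 1) * p) ^ #A := by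
        rw [add_comm, ← sum_pow_mul_eq_add_pow, mul_sum]
        refine sum_congr rfl fun S _ ↦ ?_
        rw [one_pow, mul_one, mul_pow]
        ring

theorem card_filter_mean_add_le_card_inter_le (hm : m ≤ Fintype.card α) {A : Finset α}
    (hA : A.Nonempty) {t : ℝ} (ht : 0 ≤ t) :
    (#{B ∈ powersetCard m univ | #A * m / Fintype.card α + t ≤ #(A ∩ B)} : ℝ)
      ≤ (Fintype.card α).choose m * exp (-2 * t ^ 2 / #A) := by
  rw [mul_div_assoc]
  set p : ℝ := m / Fintype.card α
  have ha : (0 : ℝ) < #A := Nat.cast_pos.2 hA.card_pos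
  have hp0 : 0 ≤ p := by positivity
  have hp1 : p ≤ 1 := div_le_one_of_le₀ (by exact_mod_cast hm) (Nat.cast_nonneg _)
  -- the Chernoff parameter minimising `-l * t + #A * l ^ 2 / 8`
  set l : ℝ := 4 * t / #A
  have hl : 0 ≤ l := by positivity
  set θ : ℝ := #A * p + t
  calc (#{B ∈ powersetCard m univ | θ ≤ #(A ∩ B)} : ℝ)
      = ∑ B ∈ powersetCard m univ with θ ≤ #(A ∩ B), (1 : ℝ) := by simp
    _ ≤ ∑ B ∈ powersetCard m univ with θ ≤ #(A ∩ B), exp (l * (#(A ∩ B) - θ)) := by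
        refine sum_le_sum fun B hB ↦ one_le_exp (mul_nonneg hl ?_)
        exact sub_nonneg.2 (mem_filter.1 hB).2
    _ ≤ ∑ B ∈ powersetCard m univ, exp (l * (#(A ∩ B) - θ)) :=
        sum_le_sum_of_subset_of_nonneg (filter_subset _ _) fun _ _ _ ↦ (exp_pos _).le
    _ = exp (-(l * θ)) * ∑ B ∈ powersetCard m univ, exp l ^ #(A ∩ B) := by
        rw [mul_sum]
        refine sum_congr rfl fun B _ ↦ ?_
        rw [← exp_nat_mul, ← exp_add]
        ring_nf
    _ ≤ exp (-(l * θ)) * ((Fintype.card α).choose m * (1 - p + p * exp l) ^ #A) := by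
        rw [show 1 - p + p * exp l = 1 + (exp l - 1) * p by ring]
        gcongr
        exact sum_powersetCard_univ_pow_card_inter_le hm A (one_le_exp hl)
    _ ≤ exp (-(l * θ)) * ((Fintype.card α).choose m * exp (p * l + l ^ 2 / 8) ^ #A) := by
        gcongr
        exact one_sub_add_mul_exp_le hp0 hp1 l
    _ = (Fintype.card α).choose m * exp (-2 * t ^ 2 / #A) := by
        rw [← exp_nat_mul, mul_left_comm, ← exp_add]
        congr 2
        simp only [θ, l]
        field_simp
        ring

namespace Fintype
variable {ι κ : Type*} [Fintype ι] [DecidableEq ι] [DecidableEq κ]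

theorem card_filter_piFinset_const_eq_and_eq (s : Finset κ) {i j : ι} (hij : i ≠ j) {x y : κ}
    (hx : x ∈ s) (hy : y ∈ s) :
    #{f ∈ piFinset fun _ ↦ s | f i = x ∧ f j = y} = #s ^ (card ι - 2) := by
  rw [← filter_filter, ← piFinset_update_singleton_eq_filter_piFinset_eq (fun _ ↦ s) i hx,
    card_filter_piFinset_eq_of_mem (Function.update (fun _ ↦ s) i {x}) j
      (by simpa [hij.symm] using hy),
    ← mul_prod_erase _ _ (mem_erase.2 ⟨hij, mem_univ i⟩),
    Finset.prod_congr rfl fun k hk ↦ by rw [Function.update_of_ne (ne_of_mem_erase hk)],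
    prod_const]
  simp [card_erase_of_mem, hij, Nat.sub_sub]

theorem card_filter_piFinset_const_apply_apply (s : Finset κ) {i j : ι} (hij : i ≠ j)
    (R : κ → κ → Prop) [DecidableRel R] :
    #{f ∈ piFinset fun _ ↦ s | R (f i) (f j)}
      = #{q ∈ s ×ˢ s | R q.1 q.2} * #s ^ (card ι - 2) := by
  rw [card_eq_sum_card_fiberwise (f := fun f ↦ (f i, f j)) (t := {q ∈ s ×ˢ s | R q.1 q.2})
    fun f hf ↦ by simp_all]
  refine (Finset.sum_congr rfl fun q hq ↦ ?_).trans (by rw [sum_const, smul_eq_mul])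
  simp only [mem_filter, mem_product] at hq
  rw [filter_filter, ← card_filter_piFinset_const_eq_and_eq s hij hq.1.1 hq.1.2]
  congr 1
  refine filter_congr fun f _ ↦ ?_
  rw [Prod.ext_iff]
  exact ⟨fun h ↦ h.2, fun h ↦ ⟨h.1 ▸ h.2 ▸ hq.2, h⟩⟩
end Fintype

theorem one_sub_card_mul_mul_card_le_card_filter_forall {β ι : Type*} [Fintype ι]
    (s : Finset β) (p : ι → β → Prop) [∀ i, DecidablePred (p i)] {δ : ℝ}
    (h : ∀ i, (#{b ∈ s | ¬p i b} : ℝ) ≤ δ * #s) :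
    (1 - Fintype.card ι * δ) * #s ≤ #{b ∈ s | ∀ i, p i b} := by
  classical
  have hbad : #{b ∈ s | ¬∀ i, p i b} ≤ ∑ i, #{b ∈ s | ¬p i b} := by
    refine (card_le_card fun b hb ↦ ?_).trans card_biUnion_le
    simp only [mem_filter, not_forall] at hb
    obtain ⟨hb, i, hi⟩ := hb
    exact mem_biUnion.2 ⟨i, mem_univ i, mem_filter.2 ⟨hb, hi⟩⟩
  have hsplit := card_filter_add_card_filter_not (s := s) (fun b ↦ ∀ i, p i b)
  calc (1 - Fintype.card ι * δ) * #s = #s - ∑ _ : ι, δ * #s := by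
        rw [sum_const, card_univ, nsmul_eq_mul]; ring
    _ ≤ #s - ∑ i, (#{b ∈ s | ¬p i b} : ℝ) := by gcongr with i; exact h i
    _ ≤ #s - #{b ∈ s | ¬∀ i, p i b} := by gcongr; exact_mod_cast hbad
    _ = #{b ∈ s | ∀ i, p i b} := by rw [← hsplit]; push_cast; ring

theorem card_filter_sq_div_add_le_card_inter_le (hm : m ≤ Fintype.card α) (hm0 : 0 < m) {ε : ℝ}
    (hε : 0 ≤ ε) :
    (#{q ∈ powersetCard m (univ : Finset α) ×ˢ powersetCard m univ |
        (m : ℝ) ^ 2 / Fintype.card α + ε * Fintype.card α ≤ #(q.1 ∩ q.2)} : ℝ)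
      ≤ exp (-2 * ε ^ 2 * Fintype.card α) * (Fintype.card α).choose m ^ 2 := by
  set n := Fintype.card α
  have hn : (0 : ℝ) < n := by exact_mod_cast hm0.trans_le hm
  have hexp : exp (-2 * (ε * n) ^ 2 / m) ≤ exp (-2 * ε ^ 2 * n) := by
    rw [exp_le_exp, div_le_iff₀ (by exact_mod_cast hm0)]
    nlinarith [mul_le_mul_of_nonneg_left (show (m : ℝ) ≤ n by exact_mod_cast hm)
      (by positivity : (0 : ℝ) ≤ 2 * ε ^ 2 * n)]
  rw [card_filter, sum_product]
  simp only [← card_filter]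
  push_cast
  calc ∑ A ∈ powersetCard m univ, (#{B ∈ powersetCard m univ |
          (m : ℝ) ^ 2 / n + ε * n ≤ #(A ∩ B)} : ℝ)
      ≤ ∑ _A ∈ powersetCard m univ, (n.choose m : ℝ) * exp (-2 * ε ^ 2 * n) := by
        refine sum_le_sum fun A hA ↦ ?_
        have hAm : #A = m := (mem_powersetCard.1 hA).2
        have htail := card_filter_mean_add_le_card_inter_le hm
          (card_pos.1 (hAm ▸ hm0)) (mul_nonneg hε hn.le)
        rw [hAm, ← sq] at htail
        exact htail.trans (by gcongr)
    _ = exp (-2 * ε ^ 2 * n) * n.choose m ^ 2 := by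
        rw [sum_const, card_powersetCard, card_univ, nsmul_eq_mul]; ring

theorem card_filter_piFinset_sq_div_add_le_card_inter_le {ι : Type*} [Fintype ι] [DecidableEq ι]
    (hm : m ≤ Fintype.card α) (hm0 : 0 < m) {ε : ℝ} (hε : 0 ≤ ε) {i j : ι} (hij : i ≠ j) :
    (#{b ∈ Fintype.piFinset fun _ : ι ↦ powersetCard m (univ : Finset α) |
        (m : ℝ) ^ 2 / Fintype.card α + ε * Fintype.card α ≤ #(b i ∩ b j)} : ℝ)
      ≤ exp (-2 * ε ^ 2 * Fintype.card α) * (Fintype.card α).choose m ^ Fintype.card ι := by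
  have hι : 2 ≤ Fintype.card ι := by
    simpa [card_pair hij] using card_le_univ {i, j}
  have hcount :=
    Fintype.card_filter_piFinset_const_apply_apply (powersetCard m (univ : Finset α)) hij
    (fun A B ↦ (m : ℝ) ^ 2 / Fintype.card α + ε * Fintype.card α ≤ #(A ∩ B))
  simp only [hcount]
  push_cast
  calc _ ≤ exp (-2 * ε ^ 2 * Fintype.card α) * (Fintype.card α).choose m ^ 2
          * (#(powersetCard m (univ : Finset α)) : ℝ) ^ (Fintype.card ι - 2) := by
        gcongr
        exact card_filter_sq_div_add_le_card_inter_le hm hm0 hε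
    _ = _ := by rw [card_powersetCard, card_univ, mul_assoc, ← pow_add, Nat.add_sub_cancel' hι]

/-- Tail bound on the maximum pairwise overlap of `K` independent uniformly random
size-`M` subsets `B₁, …, B_K` of an `N`-element set (modeled by the uniform
distribution on the finite sample space `Ω` of `K`-tuples of size-`M` subsets):
for all `ε > 0`,
`P(max_{i<j} |B_i ∩ B_j| < M²/N + εN) ≥ 1 − exp(−2ε²N + 2 log K)`. -/
theorem stmt5 (N M K : ℕ) (hM : 1 ≤ M) (hMN : M ≤ N) (hK : 1 ≤ K)
    (Ω : Finset (Fin K → Finset (Fin N)))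
    (hΩ : Ω = Finset.univ.filter
      (fun b => ∀ k, b k ∈ Finset.powersetCard M (Finset.univ : Finset (Fin N))))
    (ε : ℝ) (hε : 0 < ε) :
    1 - Real.exp (-2 * ε ^ 2 * N + 2 * Real.log K) ≤
      ((Ω.filter (fun b => ∀ i j : Fin K, i < j →
          (((b i ∩ b j).card : ℝ) < (M : ℝ) ^ 2 / N + ε * N))).card : ℝ) / Ω.card := by
  have hΩ' : Ω = Fintype.piFinset fun _ : Fin K ↦ powersetCard M univ := by
    rw [hΩ]; ext b; simp [Fintype.mem_piFinset]
  have hΩcard : (#Ω : ℝ) = N.choose M ^ K := by simp [hΩ']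
  have hpair (q : Fin K × Fin K) :
      (#{b ∈ Ω | ¬(q.1 < q.2 → (#(b q.1 ∩ b q.2) : ℝ) < M ^ 2 / N + ε * N)} : ℝ)
        ≤ exp (-2 * ε ^ 2 * N) * #Ω := by
    by_cases hq : q.1 < q.2
    · simp only [hq, true_imp_iff, not_lt, hΩcard]
      rw [hΩ']
      simpa using card_filter_piFinset_sq_div_add_le_card_inter_le (α := Fin N)
        (by simpa using hMN) hM hε.le hq.ne
    · simp only [hq, IsEmpty.forall_iff, not_true_eq_false, filter_false, card_empty,
        Nat.cast_zero]
      positivity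
  have hunion := one_sub_card_mul_mul_card_le_card_filter_forall Ω _ hpair
  rw [Fintype.card_prod, Fintype.card_fin, filter_congr fun b _ ↦ Prod.forall] at hunion
  have hexp : exp (2 * log K) = (K : ℝ) ^ 2 := by
    rw [← Nat.cast_ofNat, ← log_pow, exp_log (pow_pos (Nat.cast_pos.2 hK) 2)]
  rw [exp_add, hexp, le_div_iff₀ (hΩcard ▸ pow_pos (Nat.cast_pos.2 (Nat.choose_pos hMN)) K)]
  push_cast at hunion
  linarith
end

section
/- Let Σ ∈ ℝ^{p×p} be symmetric positive definite and S ⊆ [p]. If every diagonal entry of Θ = Σ^{-1} is at most a constant c > 0 and |S| ≤ m, then λ_min(Σ_{S,S}) ≥ 1/(m·c). -/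
/-!
Each diagonal entry of the inverse of a positive definite matrix has the variational form
`Σ⁻¹ i i = max_x (2 xᵢ - xᵀ Σ x)`. Vectors supported on `S` are admissible competitors, so the
diagonal of `(Σ_{S,S})⁻¹` is dominated by that of `Σ⁻¹` (the Schur complement correction is
positive semidefinite), whence `trace (Σ_{S,S})⁻¹ ≤ m c`. The eigenvalues of `(Σ_{S,S})⁻¹` are
the reciprocals of those of `Σ_{S,S}` and are positive, so each of them is at most the trace.
-/

namespace Matrix

variable {n : Type*} [Fintype n] [DecidableEq n]

lemma IsHermitian.trace_inv {𝕜 : Type*} [RCLike 𝕜] {A : Matrix n n 𝕜} (hA : A.IsHermitian)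
    (h : IsUnit A) : A⁻¹.trace = ∑ i, ((hA.eigenvalues i)⁻¹ : 𝕜) := by
  have hcfc : A⁻¹ = cfc (fun x : ℝ => x⁻¹) A := by
    have ha : IsSelfAdjoint (h.unit : Matrix n n 𝕜) := by rw [h.unit_spec]; exact hA.isSelfAdjoint
    rw [← h.unit_spec, ← coe_units_inv, cfc_inv_id (R := ℝ) h.unit ha]
  rw [hcfc, hA.cfc_eq, IsHermitian.cfc, Unitary.conjStarAlgAut_apply, trace_mul_cycle,
    Unitary.coe_star_mul_self, Matrix.one_mul, trace_diagonal]
  simp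

open scoped ComplexOrder in
lemma PosDef.inv_eigenvalues_le_re_trace_inv {𝕜 : Type*} [RCLike 𝕜] {A : Matrix n n 𝕜}
    (hA : A.PosDef) (k : n) : (hA.1.eigenvalues k)⁻¹ ≤ RCLike.re A⁻¹.trace := by
  rw [hA.1.trace_inv hA.isUnit, map_sum]
  simp only [← RCLike.ofReal_inv, RCLike.ofReal_re]
  exact Finset.single_le_sum (fun i _ => (inv_pos.2 (hA.eigenvalues_pos i)).le)
    (Finset.mem_univ k)

lemma PosDef.two_mul_sub_dotProduct_mulVec_le_inv_apply {M : Matrix n n ℝ} (hM : M.PosDef)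
    (x : n → ℝ) (i : n) : 2 * x i - x ⬝ᵥ (M *ᵥ x) ≤ M⁻¹ i i := by
  set u := M⁻¹ *ᵥ Pi.single i 1 with hu_def
  have hMu : M *ᵥ u = Pi.single i 1 := by
    rw [mulVec_mulVec, mul_nonsing_inv _ ((isUnit_iff_isUnit_det M).1 hM.isUnit), one_mulVec]
  have hsymm : u ⬝ᵥ (M *ᵥ x) = x ⬝ᵥ (M *ᵥ u) := by
    rw [dotProduct_mulVec, ← mulVec_transpose, ← conjTranspose_eq_transpose_of_trivial,
      hM.1.eq, dotProduct_comm]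
  have hu : u ⬝ᵥ (M *ᵥ u) = M⁻¹ i i := by
    rw [hMu, dotProduct_single_one, hu_def, mulVec_single_one, col_apply]
  have hxu : x ⬝ᵥ (M *ᵥ u) = x i := by rw [hMu, dotProduct_single_one]
  have hnonneg := hM.posSemidef.dotProduct_mulVec_nonneg (x - u)
  rw [star_trivial, mulVec_sub, dotProduct_sub, sub_dotProduct, sub_dotProduct, hsymm, hu,
    hxu] at hnonneg
  linarith

lemma one_submatrix_mul_mul_one_submatrix {m R : Type*} [NonAssocSemiring R]
    (M : Matrix n n R) (e : m → n) :
    (1 : Matrix n n R).submatrix e id * M * (1 : Matrix n n R).submatrix id e =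
      M.submatrix e e := by
  ext a b
  simp [mul_apply, one_apply]

lemma dotProduct_mulVec_submatrix {m R : Type*} [Fintype m] [CommSemiring R]
    (M : Matrix n n R) (e : m → n) (y : m → R) :
    y ⬝ᵥ (M.submatrix e e *ᵥ y) =
      ((1 : Matrix n n R).submatrix id e *ᵥ y) ⬝ᵥ
        (M *ᵥ ((1 : Matrix n n R).submatrix id e *ᵥ y)) := by
  rw [← one_submatrix_mul_mul_one_submatrix, ← mulVec_mulVec, ← mulVec_mulVec, dotProduct_mulVec,
    ← mulVec_transpose, transpose_submatrix, transpose_one]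

lemma PosDef.inv_submatrix_apply_le {m : Type*} [Fintype m] [DecidableEq m] {M : Matrix n n ℝ}
    (hM : M.PosDef) {e : m → n} (he : Function.Injective e) (i : m) :
    (M.submatrix e e)⁻¹ i i ≤ M⁻¹ (e i) (e i) := by
  set A := M.submatrix e e
  set y := A⁻¹ *ᵥ Pi.single i 1 with hy_def
  -- `P *ᵥ y` is the extension of `y` by zero off the range of `e`
  set P := (1 : Matrix n n ℝ).submatrix id e
  have hPy : (P *ᵥ y) (e i) = y i := by
    simp [P, mulVec, dotProduct, one_apply, he.eq_iff]
  have hAy : A *ᵥ y = Pi.single i 1 := by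
    have hA : IsUnit A.det := (isUnit_iff_isUnit_det A).1 (hM.submatrix he).isUnit
    rw [hy_def, mulVec_mulVec, mul_nonsing_inv _ hA, one_mulVec]
  have hyi : y i = A⁻¹ i i := by rw [hy_def, mulVec_single_one, col_apply]
  calc A⁻¹ i i = 2 * y i - y ⬝ᵥ (A *ᵥ y) := by rw [hAy, dotProduct_single_one, hyi]; ring
    _ = 2 * (P *ᵥ y) (e i) - (P *ᵥ y) ⬝ᵥ (M *ᵥ (P *ᵥ y)) := by
      rw [hPy, dotProduct_mulVec_submatrix]
    _ ≤ M⁻¹ (e i) (e i) := hM.two_mul_sub_dotProduct_mulVec_le_inv_apply _ _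

end Matrix

theorem stmt8_general {p : ℕ} (Sg : Matrix (Fin p) (Fin p) ℝ)
    (hpd : Sg.PosDef) (c : ℝ) (hc : 0 < c)
    (hdiag : ∀ i, Sg⁻¹ i i ≤ c) (m : ℕ) (S : Finset (Fin p)) (hS : S.card ≤ m)
    (A : Matrix ↥S ↥S ℝ) (hAdef : A = Matrix.of fun a b : ↥S => Sg a.1 b.1)
    (hA : A.IsHermitian) :
    ∀ k, 1 / ((m : ℝ) * c) ≤ hA.eigenvalues k := by
  intro k
  have hAsub : A = Sg.submatrix Subtype.val Subtype.val := hAdef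
  have hApd : A.PosDef := hAsub ▸ hpd.submatrix Subtype.val_injective
  have htrace : A⁻¹.trace ≤ m * c :=
    calc A⁻¹.trace = ∑ i, A⁻¹ i i := rfl
      _ ≤ ∑ _i : S, c := Finset.sum_le_sum fun i _ =>
        (hAsub ▸ hpd.inv_submatrix_apply_le Subtype.val_injective i).trans (hdiag i)
      _ = S.card * c := by simp
      _ ≤ m * c := by gcongr
  have hk : (hA.eigenvalues k)⁻¹ ≤ A⁻¹.trace := hApd.inv_eigenvalues_le_re_trace_inv k
  rw [one_div]
  exact inv_le_of_inv_le₀ (hApd.eigenvalues_pos k) (hk.trans htrace)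

/-- If `Σ` is symmetric positive definite, every diagonal entry of `Θ = Σ⁻¹` is at most
`c > 0`, and `|S| ≤ m`, then `λ_min(Σ_{S,S}) ≥ 1/(m·c)`, i.e. every eigenvalue of the
principal submatrix `Σ_{S,S}` is at least `1/(m·c)`. -/
theorem stmt8 {p : ℕ} (Sg : Matrix (Fin p) (Fin p) ℝ)
    (hpd : Sg.PosDef) (hsym : Sg.IsSymm) (c : ℝ) (hc : 0 < c)
    (hdiag : ∀ i, Sg⁻¹ i i ≤ c) (m : ℕ) (S : Finset (Fin p)) (hS : S.card ≤ m)
    (A : Matrix ↥S ↥S ℝ) (hAdef : A = Matrix.of fun a b : ↥S => Sg a.1 b.1)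
    (hA : A.IsHermitian) :
    ∀ k, 1 / ((m : ℝ) * c) ≤ hA.eigenvalues k :=
  stmt8_general Sg hpd c hc hdiag m S hS A hAdef hA
end
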